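/- Let m be a positive integer and let π be an alternating permutation of [2m] with exactly m fixed points. For each j with 1 ≤ j ≤ m, exactly one of 2j-1 and 2j is a fixed point of π; let b_j denote the element of {2j-1, 2j} that is not fixed by π. Then π permutes the set {b_1, ..., b_m}, and the map σ of [m] defined by π(b_j) = b_{σ(j)} is a derangement of [m]. -/
import Mathlib


/-- `π` is an alternating permutation: `π 1 > π 2 < π 3 > π 4 < ⋯`
(here stated with 0-indexed positions). -/
def IsAlternating {n : ℕ} (π : Equiv.Perm (Fin n)) : Prop :=
  ∀ i : ℕ, ∀ h : i + 1 < n,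
    if i % 2 = 0 then π ⟨i + 1, h⟩ < π ⟨i, Nat.lt_of_succ_lt h⟩
    else π ⟨i, Nat.lt_of_succ_lt h⟩ < π ⟨i + 1, h⟩

/-- `π` is a reverse alternating permutation: `π 1 < π 2 > π 3 < π 4 > ⋯`
(here stated with 0-indexed positions). -/
def IsRevAlternating {n : ℕ} (π : Equiv.Perm (Fin n)) : Prop :=
  ∀ i : ℕ, ∀ h : i + 1 < n,
    if i % 2 = 0 then π ⟨i, Nat.lt_of_succ_lt h⟩ < π ⟨i + 1, h⟩
    else π ⟨i + 1, h⟩ < π ⟨i, Nat.lt_of_succ_lt h⟩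

/-- The number of fixed points of a permutation of `Fin n`. -/
def fixedPointCount {n : ℕ} (π : Equiv.Perm (Fin n)) : ℕ :=
  (Finset.univ.filter fun i => π i = i).card

/-- For `j ∈ [m]` (0-indexed `j : Fin m`), the 0-indexed position of `2j-1 ∈ [2m]`
(1-indexed), i.e. the smaller element of the pair `I_j = {2j-1, 2j}`. -/
def pairLow {m : ℕ} (j : Fin m) : Fin (2 * m) :=
  ⟨2 * j.val, by have := j.isLt; omega⟩

/-- For `j ∈ [m]` (0-indexed `j : Fin m`), the 0-indexed position of `2j ∈ [2m]`
(1-indexed), i.e. the larger element of the pair `I_j = {2j-1, 2j}`. -/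
def pairHigh {m : ℕ} (j : Fin m) : Fin (2 * m) :=
  ⟨2 * j.val + 1, by have := j.isLt; omega⟩

/-- `b_j`: the element of the pair `I_j = {2j-1, 2j}` that is not fixed by `π`
(assuming exactly one of them is fixed, this is the moved one). -/
def movedPoint {m : ℕ} (π : Equiv.Perm (Fin (2 * m))) (j : Fin m) : Fin (2 * m) :=
  if π (pairLow j) = pairLow j then pairHigh j else pairLow j

/-- If `π` is an alternating permutation of `[2m]` with exactly `m` fixed points, then for
each `j ∈ [m]` exactly one of `2j-1` and `2j` is a fixed point of `π`; letting `b_j` be the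
non-fixed one, `π` permutes the `b_j` and the induced map `σ` with `π(b_j) = b_{σ(j)}` is a
derangement of `[m]`. -/
theorem alternating_induces_derangement (m : ℕ) (hm : 1 ≤ m)
    (π : Equiv.Perm (Fin (2 * m))) (hπ : IsAlternating π)
    (hfix : fixedPointCount π = m) :
    (∀ j : Fin m, (π (pairLow j) = pairLow j ↔ ¬ π (pairHigh j) = pairHigh j)) ∧
    ∃ σ : Equiv.Perm (Fin m), (∀ x, σ x ≠ x) ∧
      ∀ j : Fin m, π (movedPoint π j) = movedPoint π (σ j) := by
  -- Step 1: not both elements of a pair are fixed.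
  have hnot : ∀ j : Fin m, ¬ (π (pairLow j) = pairLow j ∧ π (pairHigh j) = pairHigh j) := by
    rintro j ⟨h1, h2⟩
    have hlt : 2 * j.val + 1 < 2 * m := by have := j.isLt; omega
    have h := hπ (2 * j.val) hlt
    rw [if_pos (by omega)] at h
    have e1 : (⟨2 * j.val, Nat.lt_of_succ_lt hlt⟩ : Fin (2 * m)) = pairLow j := rfl
    have e2 : (⟨2 * j.val + 1, hlt⟩ : Fin (2 * m)) = pairHigh j := rfl
    rw [e1, e2, h1, h2] at h
    simp [pairLow, pairHigh, Fin.lt_def] at h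
  -- the pair-index map
  have hg : ∀ x : Fin (2 * m), x.val / 2 < m := fun x => by have := x.isLt; omega
  set g : Fin (2 * m) → Fin m := fun x => ⟨x.val / 2, hg x⟩ with hgdef
  -- a fixed point x equals pairLow (g x) or pairHigh (g x)
  have hcase : ∀ x : Fin (2 * m), x = pairLow (g x) ∨ x = pairHigh (g x) := by
    intro x
    rcases Nat.even_or_odd x.val with ⟨k, hk⟩ | ⟨k, hk⟩
    · left; apply Fin.ext; simp [pairLow, hgdef]; omega
    · right; apply Fin.ext; simp [pairHigh, hgdef]; omega
  set F := Finset.univ.filter fun i : Fin (2 * m) => π i = i with hF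
  have hinjF : Set.InjOn g F := by
    intro x hx y hy hxy
    by_contra hne
    simp [hF, Finset.mem_filter] at hx hy
    have hjj : x.val / 2 = y.val / 2 := congrArg Fin.val hxy
    rcases hcase x with ex | ex <;> rcases hcase y with ey | ey
    · exact hne (ex.trans (by rw [hxy, ← ey]))
    · exact hnot (g x) ⟨by rw [← ex]; exact hx, by rw [hxy, ← ey]; exact hy⟩
    · exact hnot (g x) ⟨by rw [hxy, ← ey]; exact hy, by rw [← ex]; exact hx⟩
    · exact hne (ex.trans (by rw [hxy, ← ey]))
  have hcard : (F.image g).card = m := by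
    rw [Finset.card_image_of_injOn hinjF]; exact hfix
  have himage : F.image g = Finset.univ := by
    apply Finset.eq_univ_of_card; simpa using hcard
  -- Step 2: each pair has exactly one fixed point.
  have hiff : ∀ j : Fin m, (π (pairLow j) = pairLow j ↔ ¬ π (pairHigh j) = pairHigh j) := by
    intro j
    have hj : j ∈ F.image g := himage ▸ Finset.mem_univ j
    obtain ⟨x, hx, hgx⟩ := Finset.mem_image.mp hj
    simp only [hF, Finset.mem_filter] at hx
    rcases hcase x with ex | ex
    · rw [hgx] at ex
      constructor
      · intro _ hhigh; exact hnot j ⟨by rw [← ex]; exact hx.2, hhigh⟩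
      · intro _; rw [← ex]; exact hx.2
    · rw [hgx] at ex
      constructor
      · intro hlow _; exact hnot j ⟨hlow, by rw [← ex]; exact hx.2⟩
      · intro hh; exact absurd (by rw [← ex]; exact hx.2) hh
  refine ⟨hiff, ?_⟩
  -- the moved point is not fixed, and is in pair j
  have hmoved : ∀ j : Fin m, π (movedPoint π j) ≠ movedPoint π j := by
    intro j
    unfold movedPoint
    split
    · next h => exact (hiff j).mp h
    · next h => exact h
  have hgmoved : ∀ j : Fin m, g (movedPoint π j) = j := by
    intro j
    apply Fin.ext
    unfold movedPoint
    split <;> simp [hgdef, pairLow, pairHigh] <;> omega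
  -- every non-fixed point is the moved point of its pair
  have hcanon : ∀ x : Fin (2 * m), π x ≠ x → movedPoint π (g x) = x := by
    intro x hx
    rcases hcase x with ex | ex
    · have hlow : ¬ π (pairLow (g x)) = pairLow (g x) := by rw [← ex]; exact hx
      unfold movedPoint; rw [if_neg hlow]; exact ex.symm
    · have hhigh : ¬ π (pairHigh (g x)) = pairHigh (g x) := by rw [← ex]; exact hx
      have hlow : π (pairLow (g x)) = pairLow (g x) := (hiff (g x)).mpr hhigh
      unfold movedPoint; rw [if_pos hlow]; exact ex.symm
  -- π of a moved point is not fixed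
  have hπmoved : ∀ j : Fin m, π (π (movedPoint π j)) ≠ π (movedPoint π j) := by
    intro j h
    exact hmoved j (π.injective h)
  set σ' : Fin m → Fin m := fun j => g (π (movedPoint π j)) with hσ'
  have hkey : ∀ j : Fin m, movedPoint π (σ' j) = π (movedPoint π j) := by
    intro j; exact hcanon _ (hπmoved j)
  have hinj : Function.Injective σ' := by
    intro j k hjk
    have : movedPoint π (σ' j) = movedPoint π (σ' k) := by rw [hjk]
    rw [hkey, hkey] at this
    have := π.injective this
    have := congrArg g this
    rwa [hgmoved, hgmoved] at this
  refine ⟨Equiv.ofBijective σ' (Finite.injective_iff_bijective.mp hinj), ?_, ?_⟩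
  · intro j h
    have : σ' j = j := h
    have h2 := hkey j
    rw [this] at h2
    exact hmoved j h2.symm
  · intro j
    exact (hkey j).symm
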